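/- arXiv:2407.10178 — 2 statements merged into one kernel-verified Lean document; each statement's English description precedes it below -/
import Mathlib

section
/- Let a > 0 and let φ : [0,a] → ℝ be a concave, continuous, strictly increasing function with φ(0) = 0 and φ(a) = 1 which is not linear (i.e., φ is not of the form φ(t) = t/a). Then every Lebesgue-measurable function f : [0,a] → ℂ with |f(t)| = 1 for almost every t ∈ [0,a] is an extreme point of the closed unit ball of the Lorentz space Λ(φ)[0,a]. -/
/-!
Concavity with `φ 0 = 0`, `φ a = 1` gives `φ x ≥ x / a`, so by the layer-cake formula
`∫₀ᵃ |u| = ∫₀^∞ m{|u| > l} dl ≤ a ∫₀^∞ φ(m{|u| > l}) dl = a ‖u‖_Λ`. Since a nonlinear concave `φ`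
lies strictly above its chord on `(0,a)`, equality forces `m{|u| > l} ∈ {0, a}` for a.e. `l`,
i.e. `|u|` is a.e. constant. If `‖f ± g‖_Λ ≤ 1`, then since `|f + g| + |f - g| ≥ |2f| = 2`,
`2a ≤ ∫|f + g| + ∫|f - g| ≤ a ‖f + g‖_Λ + a ‖f - g‖_Λ ≤ 2a`, so both `f ± g` are extremal for this
inequality and have modulus `1` a.e.; as their sum `2f` has modulus `2`, strict convexity of `ℂ`
gives `f + g = f - g`.
-/

open MeasureTheory Set Filter Topology
open scoped ENNReal NNReal Classical

noncomputable section

/-- The distribution function `m {s ∈ [0,a] : τ < ‖f s‖}` of `f` on `[0,a]`. -/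
def distrib {E : Type*} [NormedAddCommGroup E] (a : ℝ) (f : ℝ → E) (τ : ℝ) : ℝ≥0∞ :=
  volume {s ∈ Set.Icc (0:ℝ) a | τ < ‖f s‖}

/-- The decreasing rearrangement `f*` of `f` on `[0,a]`:
`f*(t) = inf {τ ≥ 0 : m {s ∈ [0,a] : ‖f s‖ > τ} ≤ t}`. -/
def rearr {E : Type*} [NormedAddCommGroup E] (a : ℝ) (f : ℝ → E) (t : ℝ) : ℝ :=
  sInf {τ : ℝ | 0 ≤ τ ∧ distrib a f τ ≤ ENNReal.ofReal t}

/-- The clamp of `t : ℝ` to the interval `[0,a]`. -/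
def clampIcc (a t : ℝ) : ℝ := min (max t 0) a

lemma clampIcc_mem (a t : ℝ) (ha : 0 ≤ a) : clampIcc a t ∈ Set.Icc (0:ℝ) a :=
  ⟨le_min (le_max_right t 0) ha, min_le_right _ _⟩

lemma clampIcc_mono (a : ℝ) : Monotone (clampIcc a) := fun _ _ hst =>
  min_le_min (max_le_max hst le_rfl) le_rfl

lemma clampIcc_continuous (a : ℝ) : Continuous (clampIcc a) :=
  (continuous_id.max continuous_const).min continuous_const

/-- The Stieltjes integrator associated with an increasing continuous function `φ` on `[0,a]`
(extended to all of `ℝ` as a constant outside `[0,a]`).  Its Lebesgue–Stieltjes measure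
realizes the integrals `∫₀^a ⋯ dφ(t)`. -/
def stieltjesOfOn (φ : ℝ → ℝ) (a : ℝ) : StieltjesFunction ℝ :=
  if h : 0 ≤ a ∧ MonotoneOn φ (Set.Icc 0 a) ∧ ContinuousOn φ (Set.Icc 0 a) then
    { toFun := fun t => φ (clampIcc a t)
      mono' := fun s t hst =>
        h.2.1 (clampIcc_mem a s h.1) (clampIcc_mem a t h.1) (clampIcc_mono a hst)
      right_continuous' := fun t =>
        ((h.2.2.comp_continuous (clampIcc_continuous a)
          (fun x => clampIcc_mem a x h.1)).continuousAt).continuousWithinAt }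
  else StieltjesFunction.id

/-- The Lorentz space functional `‖f‖_{Λ(φ)} = ∫₀^a f*(t) dφ(t)` (with values in `ℝ≥0∞`). -/
def eLorentzNorm {E : Type*} [NormedAddCommGroup E] (φ : ℝ → ℝ) (a : ℝ) (f : ℝ → E) : ℝ≥0∞ :=
  ∫⁻ t in Set.Ioc (0:ℝ) a, ENNReal.ofReal (rearr a f t) ∂(stieltjesOfOn φ a).measure

/-- Membership in the Lorentz space `Λ(φ)[0,a]`. -/
def MemLorentz {E : Type*} [NormedAddCommGroup E] [MeasurableSpace E]
    (φ : ℝ → ℝ) (a : ℝ) (f : ℝ → E) : Prop :=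
  Measurable f ∧ eLorentzNorm φ a f < ⊤

/-- The Hardy–Lorentz space functional
`‖f‖_{H(Λ(φ))} = sup_{0 ≤ r < 1} ‖t ↦ f (r e^{it})‖_{Λ(φ)}` for functions on the unit disk. -/
def eHLNorm (φ : ℝ → ℝ) (f : ℂ → ℂ) : ℝ≥0∞ :=
  ⨆ r ∈ Set.Ico (0:ℝ) 1,
    eLorentzNorm φ (2 * Real.pi)
      (fun t : ℝ => f (Complex.ofReal r * Complex.exp (Complex.I * Complex.ofReal t)))

/-- The classical `H¹` functional `‖f‖_{H¹} = sup_{0 ≤ r < 1} (1/(2π)) ∫₀^{2π} |f(r e^{it})| dt`. -/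
def eH1Norm (f : ℂ → ℂ) : ℝ≥0∞ :=
  ⨆ r ∈ Set.Ico (0:ℝ) 1,
    (ENNReal.ofReal (2 * Real.pi))⁻¹ *
      ∫⁻ t in Set.Ioc (0:ℝ) (2 * Real.pi),
        ENNReal.ofReal ‖f (Complex.ofReal r * Complex.exp (Complex.I * Complex.ofReal t))‖

/-- `fb` is the boundary (radial limit) function of `f`: for a.e. `t ∈ [0,2π]`,
`f(r e^{it}) → fb t` as `r → 1⁻`.  (For `f ∈ H¹` such a function exists and coincides a.e.
with the nontangential limit `f̃`.) -/
def HasRadialLimits (f : ℂ → ℂ) (fb : ℝ → ℂ) : Prop :=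
  ∀ᵐ t ∂(volume.restrict (Set.Icc (0:ℝ) (2 * Real.pi))),
    Filter.Tendsto (fun r : ℝ => f (Complex.ofReal r * Complex.exp (Complex.I * Complex.ofReal t)))
      (nhdsWithin 1 (Set.Iio 1)) (nhds (fb t))

/-- `f` (with boundary function `fb`) is an outer function:
`f` is non-null and `ln |f 0| = (1/(2π)) ∫₀^{2π} ln |fb s| ds`. -/
def IsOuter (f : ℂ → ℂ) (fb : ℝ → ℂ) : Prop :=
  (∃ z ∈ Metric.ball (0:ℂ) 1, f z ≠ 0) ∧
    Real.log ‖f 0‖ =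
      (1 / (2 * Real.pi)) * ∫ s in Set.Ioc (0:ℝ) (2 * Real.pi), Real.log ‖fb s‖

/-- The set `E₊ = {t ∈ [0,a] : h t > 0}`. -/
def posSet (a : ℝ) (h : ℝ → ℝ) : Set ℝ := {t ∈ Set.Icc (0:ℝ) a | 0 < h t}

/-- The set `E₋ = {t ∈ [0,a] : h t < 0}`. -/
def negSet (a : ℝ) (h : ℝ → ℝ) : Set ℝ := {t ∈ Set.Icc (0:ℝ) a | h t < 0}


section Distribution

variable {E : Type*} [NormedAddCommGroup E] {a τ t : ℝ} {u : ℝ → E}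

lemma distrib_eq_restrict (a : ℝ) (u : ℝ → E) (τ : ℝ) :
    distrib a u τ = volume.restrict (Icc 0 a) {s | τ < ‖u s‖} := by
  rw [Measure.restrict_apply' measurableSet_Icc, inter_comm]
  rfl

lemma distrib_le_ofReal : distrib a u τ ≤ ENNReal.ofReal a := by
  simpa [distrib_eq_restrict] using measure_mono (μ := volume.restrict (Icc 0 a)) (subset_univ _)

lemma distrib_ne_top : distrib a u τ ≠ ⊤ :=
  (distrib_le_ofReal.trans_lt ENNReal.ofReal_lt_top).ne

lemma distrib_antitone : Antitone (distrib a u) :=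
  fun _ _ h => measure_mono fun _ hs => ⟨hs.1, h.trans_lt hs.2⟩

lemma toReal_distrib_mem_Icc (ha : 0 ≤ a) : (distrib a u τ).toReal ∈ Icc 0 a :=
  ⟨ENNReal.toReal_nonneg, ENNReal.toReal_le_of_le_ofReal ha distrib_le_ofReal⟩

lemma exists_distrib_le (hu : Measurable (‖u ·‖)) (ht : 0 < t) :
    ∃ σ, 0 ≤ σ ∧ distrib a u σ ≤ ENNReal.ofReal t := by
  have hlim : Tendsto (fun n : ℕ => distrib a u n) atTop (𝓝 0) := by
    have hempty : ⋂ n : ℕ, {s ∈ Icc (0:ℝ) a | (n:ℝ) < ‖u s‖} = ∅ :=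
      eq_empty_of_forall_notMem fun s hs =>
        (exists_nat_ge ‖u s‖).elim fun n hn => hn.not_gt (mem_iInter.1 hs n).2
    have h := tendsto_measure_iInter_atTop
      (s := fun n : ℕ => {s ∈ Icc (0:ℝ) a | (n:ℝ) < ‖u s‖})
      (fun n => (measurableSet_Icc.inter (measurableSet_lt measurable_const hu)).nullMeasurableSet)
      (fun m n hmn s hs => ⟨hs.1, (Nat.cast_le.2 hmn).trans_lt hs.2⟩) ⟨0, distrib_ne_top⟩
    rwa [hempty, measure_empty] at h
  obtain ⟨n, hn⟩ := (hlim.eventually_lt_const (ENNReal.ofReal_pos.2 ht)).exists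
  exact ⟨n, n.cast_nonneg, hn.le⟩

lemma exists_gt_lt_distrib (h : ENNReal.ofReal t < distrib a u τ) :
    ∃ σ, τ < σ ∧ ENNReal.ofReal t < distrib a u σ := by
  have hunion : {s ∈ Icc (0:ℝ) a | τ < ‖u s‖} =
      ⋃ n : ℕ, {s ∈ Icc (0:ℝ) a | τ + 1 / ((n:ℝ) + 1) < ‖u s‖} := by
    ext s
    simp only [mem_iUnion, mem_sep_iff]
    refine ⟨fun ⟨hs, hlt⟩ => ?_, fun ⟨n, hs, hlt⟩ =>
      ⟨hs, by linarith [Nat.one_div_pos_of_nat (α := ℝ) (n := n)]⟩⟩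
    obtain ⟨n, hn⟩ := exists_nat_one_div_lt (sub_pos.2 hlt)
    exact ⟨n, hs, by linarith⟩
  have hmono : Monotone fun n : ℕ => {s ∈ Icc (0:ℝ) a | τ + 1 / ((n:ℝ) + 1) < ‖u s‖} :=
    fun m n hmn s hs => ⟨hs.1, lt_of_le_of_lt (by gcongr) hs.2⟩
  rw [distrib, hunion, hmono.measure_iUnion, lt_iSup_iff] at h
  obtain ⟨n, hn⟩ := h
  exact ⟨_, lt_add_of_pos_right τ Nat.one_div_pos_of_nat, hn⟩

lemma lt_rearr_iff (hu : Measurable (‖u ·‖)) (ht : 0 < t) (hτ : 0 ≤ τ) :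
    τ < rearr a u t ↔ ENNReal.ofReal t < distrib a u τ := by
  refine ⟨fun h => not_le.1 fun hle => h.not_ge (csInf_le ⟨0, fun _ h => h.1⟩ ⟨hτ, hle⟩),
    fun h => ?_⟩
  obtain ⟨σ, hτσ, hσ⟩ := exists_gt_lt_distrib h
  obtain ⟨ρ, hρ⟩ := exists_distrib_le (a := a) hu ht
  refine hτσ.trans_le (le_csInf ⟨ρ, hρ⟩ fun ρ' hρ' => ?_)
  by_contra! hlt
  exact (hσ.trans_le (distrib_antitone hlt.le)).not_ge hρ'.2

lemma rearr_nonneg (a : ℝ) (u : ℝ → E) (t : ℝ) : 0 ≤ rearr a u t :=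
  Real.sInf_nonneg fun _ hτ => hτ.1

lemma rearr_antitoneOn (hu : Measurable (‖u ·‖)) : AntitoneOn (rearr a u) (Ioi 0) :=
  fun _ hs _ _ hst => csInf_le_csInf ⟨0, fun _ h => h.1⟩ (exists_distrib_le hu hs)
    fun _ hτ => ⟨hτ.1, hτ.2.trans (ENNReal.ofReal_le_ofReal hst)⟩

lemma lintegral_norm_eq_lintegral_distrib (hu : Measurable (‖u ·‖)) :
    ∫⁻ s in Icc 0 a, ENNReal.ofReal ‖u s‖ = ∫⁻ l in Ioi 0, distrib a u l := by
  simp only [distrib_eq_restrict]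
  exact lintegral_eq_lintegral_meas_lt _ (ae_of_all _ fun _ => norm_nonneg _) hu.aemeasurable

end Distribution

section Stieltjes

variable {φ : ℝ → ℝ} {a : ℝ}

lemma stieltjesOfOn_eq_comp_clampIcc (ha : 0 ≤ a) (hm : MonotoneOn φ (Icc 0 a))
    (hc : ContinuousOn φ (Icc 0 a)) :
    ⇑(stieltjesOfOn φ a) = φ ∘ clampIcc a := by
  rw [stieltjesOfOn, dif_pos ⟨ha, hm, hc⟩]
  rfl

lemma stieltjesOfOn_measure_Ioo (ha : 0 ≤ a) (hm : MonotoneOn φ (Icc 0 a))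
    (hc : ContinuousOn φ (Icc 0 a)) (hφ0 : φ 0 = 0) {x : ℝ} (hx : x ∈ Icc 0 a) :
    (stieltjesOfOn φ a).measure (Ioo 0 x) = ENNReal.ofReal (φ x) := by
  have hcont : Continuous (stieltjesOfOn φ a) := by
    rw [stieltjesOfOn_eq_comp_clampIcc ha hm hc]
    exact hc.comp_continuous (clampIcc_continuous a) fun t => clampIcc_mem a t ha
  have hclamp {t : ℝ} (ht : t ∈ Icc 0 a) : clampIcc a t = t := by
    simp [clampIcc, ht.1, ht.2]
  rw [StieltjesFunction.measure_Ioo, leftLim_eq_of_tendsto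
    ((hcont.tendsto x).mono_left nhdsWithin_le_nhds), stieltjesOfOn_eq_comp_clampIcc ha hm hc]
  simp [hclamp hx, hclamp (left_mem_Icc.2 ha), hφ0]

end Stieltjes

section LorentzNorm

variable {E : Type*} [NormedAddCommGroup E] {φ : ℝ → ℝ} {a : ℝ} {u : ℝ → E}

lemma eLorentzNorm_eq_lintegral_distrib (ha : 0 ≤ a) (hm : MonotoneOn φ (Icc 0 a))
    (hc : ContinuousOn φ (Icc 0 a)) (hφ0 : φ 0 = 0) (hu : Measurable (‖u ·‖)) :
    eLorentzNorm φ a u = ∫⁻ l in Ioi 0, ENNReal.ofReal (φ (distrib a u l).toReal) := by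
  rw [eLorentzNorm, lintegral_eq_lintegral_meas_lt _ (ae_of_all _ (rearr_nonneg a u))
    (aemeasurable_restrict_of_antitoneOn measurableSet_Ioc
      ((rearr_antitoneOn hu).mono Ioc_subset_Ioi_self))]
  refine setLIntegral_congr_fun measurableSet_Ioi fun l hl => ?_
  have hlevel : {t | l < rearr a u t} ∩ Ioc 0 a = Ioo 0 (distrib a u l).toReal := by
    ext t
    simp only [mem_inter_iff, mem_ofPred_eq, mem_Ioc, mem_Ioo]
    constructor
    · rintro ⟨hlt, ht0, -⟩
      rw [lt_rearr_iff hu ht0 (le_of_lt hl)] at hlt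
      exact ⟨ht0, (ENNReal.ofReal_lt_iff_lt_toReal ht0.le distrib_ne_top).1 hlt⟩
    · rintro ⟨ht0, htd⟩
      refine ⟨?_, ht0, htd.le.trans (toReal_distrib_mem_Icc ha).2⟩
      rw [lt_rearr_iff hu ht0 (le_of_lt hl)]
      exact (ENNReal.ofReal_lt_iff_lt_toReal ht0.le distrib_ne_top).2 htd
  rw [Measure.restrict_apply' measurableSet_Ioc, hlevel]
  exact stieltjesOfOn_measure_Ioo ha hm hc hφ0 (toReal_distrib_mem_Icc ha)

lemma eLorentzNorm_of_norm_ae_eq (ha : 0 ≤ a) (hm : MonotoneOn φ (Icc 0 a))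
    (hc : ContinuousOn φ (Icc 0 a)) (hφ0 : φ 0 = 0) (hφa : φ a = 1) (hu : Measurable (‖u ·‖))
    {c : ℝ} (huc : ∀ᵐ s ∂volume.restrict (Icc 0 a), ‖u s‖ = c) :
    eLorentzNorm φ a u = ENNReal.ofReal c := by
  have hdistrib (l : ℝ) : distrib a u l = volume.restrict (Icc 0 a) {_s | l < c} := by
    rw [distrib_eq_restrict]
    exact measure_congr (huc.mono fun s hs => show (l < ‖u s‖) = (l < c) by rw [hs])
  have hintegrand (l : ℝ) :
      ENNReal.ofReal (φ (distrib a u l).toReal) = (Iio c).indicator 1 l := by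
    by_cases hl : l < c
    · simp [hdistrib, hl, ha, hφa]
    · simp [hdistrib, hl, hφ0]
  simp_rw [eLorentzNorm_eq_lintegral_distrib ha hm hc hφ0 hu, hintegrand,
    lintegral_indicator_one measurableSet_Iio, Measure.restrict_apply measurableSet_Iio,
    Iio_inter_Ioi, Real.volume_Ioo, sub_zero]

end LorentzNorm

section Concave

variable {φ : ℝ → ℝ} {a x : ℝ}

lemma ConcaveOn.sub_div {s : Set ℝ} (hconc : ConcaveOn ℝ s φ) (a : ℝ) :
    ConcaveOn ℝ s fun x => φ x - x / a := by
  refine ⟨hconc.1, fun x hx y hy p q hp hq hpq => ?_⟩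
  have h := hconc.2 hx hy hp hq hpq
  simp only [smul_eq_mul] at h ⊢
  linarith [show p * (x / a) + q * (y / a) = (p * x + q * y) / a by ring]

lemma div_le_of_concaveOn (ha : 0 < a) (hconc : ConcaveOn ℝ (Icc 0 a) φ) (hφ0 : φ 0 = 0)
    (hφa : φ a = 1) (hx : x ∈ Icc 0 a) : x / a ≤ φ x := by
  have h := (hconc.sub_div a).ge_on_segment (left_mem_Icc.2 ha.le) (right_mem_Icc.2 ha.le)
    (by rwa [segment_eq_Icc ha.le])
  simp only [hφ0, hφa, zero_div, div_self ha.ne', sub_self, min_self] at h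
  linarith

lemma eq_zero_or_eq_of_apply_eq_div (ha : 0 < a) (hconc : ConcaveOn ℝ (Icc 0 a) φ)
    (hφ0 : φ 0 = 0) (hφa : φ a = 1) (hnonlin : ¬ ∀ t ∈ Icc (0:ℝ) a, φ t = t / a)
    (hx : x ∈ Icc 0 a) (hφx : φ x = x / a) : x = 0 ∨ x = a := by
  push Not at hnonlin
  obtain ⟨y, hy, hφy⟩ := hnonlin
  have hψ := hconc.sub_div a
  have hxy : φ x - x / a < φ y - y / a := by
    rw [hφx, sub_self, sub_pos]
    exact (div_le_of_concaveOn ha hconc hφ0 hφa hy).lt_of_ne' hφy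
  by_contra! hx0a
  rcases lt_or_gt_of_ne (show x ≠ y by rintro rfl; exact hφy hφx) with hlt | hgt
  · have hseg : x ∈ openSegment ℝ 0 y := by
      rw [openSegment_eq_Ioo (hx.1.trans_lt hlt)]
      exact ⟨hx.1.lt_of_ne hx0a.1.symm, hlt⟩
    simpa [hφ0, hφx] using hψ.left_lt_of_lt_right (left_mem_Icc.2 ha.le) hy hseg hxy
  · have hseg : x ∈ openSegment ℝ y a := by
      rw [openSegment_eq_Ioo (hgt.trans_le hx.2)]
      exact ⟨hgt, hx.2.lt_of_ne hx0a.2⟩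
    simpa [hφa, hφx, ha.ne'] using hψ.lt_right_of_left_lt hy (right_mem_Icc.2 ha.le) hseg hxy

end Concave

lemma exists_ae_eq_apply_of_ae_le_or_ae_lt {α : Type*} [MeasurableSpace α] {μ : Measure α}
    [NeZero μ] {F : α → ℝ}
    (h : ∀ᵐ l ∂(volume : Measure ℝ), (∀ᵐ x ∂μ, F x ≤ l) ∨ ∀ᵐ x ∂μ, l < F x) :
    ∃ x₀, ∀ᵐ x ∂μ, F x = F x₀ := by
  obtain ⟨T, hT, hTc, hTd⟩ := (Measure.dense_of_ae h).exists_countable_dense_subset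
  -- Along a countable dense set of levels, a.e. point sees the same side of every level.
  have hside : ∀ᵐ x ∂μ, ∀ l ∈ T, (F x ≤ l ↔ ∀ᵐ y ∂μ, F y ≤ l) := by
    refine (ae_ball_iff hTc).2 fun l hl => ?_
    rcases hT hl with hle | hlt
    · exact hle.mono fun x hx => iff_of_true hx hle
    · refine hlt.mono fun x hx => iff_of_false hx.not_ge fun hle => ?_
      obtain ⟨y, hy, hy'⟩ := (hle.and hlt).exists
      exact hy.not_gt hy'
  obtain ⟨x₀, hx₀⟩ := hside.exists
  refine ⟨x₀, hside.mono fun x hx => le_antisymm ?_ ?_⟩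
  · by_contra! hlt
    obtain ⟨l, hlT, hl₀, hl⟩ := hTd.exists_between hlt
    exact hl.not_ge ((hx l hlT).2 ((hx₀ l hlT).1 hl₀.le))
  · by_contra! hlt
    obtain ⟨l, hlT, hl, hl₀⟩ := hTd.exists_between hlt
    exact hl₀.not_ge ((hx₀ l hlT).2 ((hx l hlT).1 hl.le))

section Rigidity

variable {E : Type*} [NormedAddCommGroup E] {φ : ℝ → ℝ} {a : ℝ} {u : ℝ → E}

lemma distrib_le_ofReal_mul (ha : 0 < a) (hconc : ConcaveOn ℝ (Icc 0 a) φ) (hφ0 : φ 0 = 0)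
    (hφa : φ a = 1) (l : ℝ) :
    distrib a u l ≤ ENNReal.ofReal a * ENNReal.ofReal (φ (distrib a u l).toReal) := by
  have h := div_le_of_concaveOn ha hconc hφ0 hφa (toReal_distrib_mem_Icc (u := u) (τ := l) ha.le)
  rw [div_le_iff₀' ha] at h
  calc distrib a u l = ENNReal.ofReal (distrib a u l).toReal :=
        (ENNReal.ofReal_toReal distrib_ne_top).symm
  _ ≤ ENNReal.ofReal (a * φ (distrib a u l).toReal) := ENNReal.ofReal_le_ofReal h
  _ = _ := ENNReal.ofReal_mul ha.le

lemma antitone_comp_distrib (ha : 0 ≤ a) (hm : MonotoneOn φ (Icc 0 a)) :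
    Antitone fun l => φ (distrib a u l).toReal :=
  fun _ _ hl => hm (toReal_distrib_mem_Icc ha) (toReal_distrib_mem_Icc ha)
    (ENNReal.toReal_mono distrib_ne_top (distrib_antitone hl))

lemma lintegral_norm_le_mul_eLorentzNorm (ha : 0 < a) (hconc : ConcaveOn ℝ (Icc 0 a) φ)
    (hm : MonotoneOn φ (Icc 0 a)) (hc : ContinuousOn φ (Icc 0 a)) (hφ0 : φ 0 = 0)
    (hφa : φ a = 1) (hu : Measurable (‖u ·‖)) :
    ∫⁻ s in Icc 0 a, ENNReal.ofReal ‖u s‖ ≤ ENNReal.ofReal a * eLorentzNorm φ a u := by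
  rw [lintegral_norm_eq_lintegral_distrib hu, eLorentzNorm_eq_lintegral_distrib ha.le hm hc hφ0 hu,
    ← lintegral_const_mul' _ _ ENNReal.ofReal_ne_top]
  exact setLIntegral_mono' measurableSet_Ioi fun l _ => distrib_le_ofReal_mul ha hconc hφ0 hφa l

lemma ae_distrib_eq_zero_or_eq_of_mul_eLorentzNorm_le (ha : 0 < a)
    (hconc : ConcaveOn ℝ (Icc 0 a) φ) (hm : MonotoneOn φ (Icc 0 a)) (hc : ContinuousOn φ (Icc 0 a))
    (hφ0 : φ 0 = 0) (hφa : φ a = 1) (hnonlin : ¬ ∀ t ∈ Icc (0:ℝ) a, φ t = t / a)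
    (hu : Measurable (‖u ·‖)) (hfin : eLorentzNorm φ a u ≠ ⊤)
    (h : ENNReal.ofReal a * eLorentzNorm φ a u ≤ ∫⁻ s in Icc 0 a, ENNReal.ofReal ‖u s‖) :
    ∀ᵐ l, 0 < l → distrib a u l = 0 ∨ distrib a u l = ENNReal.ofReal a := by
  have hfin' : ∫⁻ l in Ioi 0, distrib a u l ≠ ⊤ :=
    ((lintegral_norm_eq_lintegral_distrib hu).symm.trans_le
      (lintegral_norm_le_mul_eLorentzNorm ha hconc hm hc hφ0 hφa hu)).trans_lt
      (ENNReal.mul_lt_top ENNReal.ofReal_lt_top hfin.lt_top) |>.ne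
  rw [lintegral_norm_eq_lintegral_distrib hu, eLorentzNorm_eq_lintegral_distrib ha.le hm hc hφ0 hu,
    ← lintegral_const_mul' _ _ ENNReal.ofReal_ne_top] at h
  have heq := ae_eq_of_ae_le_of_lintegral_le
    (ae_of_all _ (distrib_le_ofReal_mul ha hconc hφ0 hφa)) hfin'
    ((antitone_comp_distrib ha.le hm).measurable.ennreal_ofReal.const_mul _).aemeasurable h
  refine (ae_restrict_iff' measurableSet_Ioi).1 ?_
  filter_upwards [heq] with l hl
  have hx := toReal_distrib_mem_Icc (u := u) (τ := l) ha.le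
  have hφx : φ (distrib a u l).toReal = (distrib a u l).toReal / a := by
    rw [eq_div_iff ha.ne', mul_comm, ← ENNReal.toReal_ofReal (mul_nonneg ha.le
      ((div_nonneg hx.1 ha.le).trans (div_le_of_concaveOn ha hconc hφ0 hφa hx))),
      ENNReal.ofReal_mul ha.le, ← hl]
  rcases eq_zero_or_eq_of_apply_eq_div ha hconc hφ0 hφa hnonlin hx hφx with h0 | ha'
  · exact .inl ((ENNReal.toReal_eq_zero_iff _).1 h0 |>.resolve_right distrib_ne_top)
  · exact .inr ((ENNReal.toReal_eq_toReal_iff' distrib_ne_top ENNReal.ofReal_ne_top).1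
      (by rw [ha', ENNReal.toReal_ofReal ha.le]))

lemma exists_norm_ae_eq_of_ae_distrib_eq_zero_or_eq (ha : 0 < a) (hu : Measurable (‖u ·‖))
    (h : ∀ᵐ l, 0 < l → distrib a u l = 0 ∨ distrib a u l = ENNReal.ofReal a) :
    ∃ s₀, ∀ᵐ s ∂volume.restrict (Icc 0 a), ‖u s‖ = ‖u s₀‖ := by
  have : NeZero (volume.restrict (Icc 0 a)) := ⟨by simp [ha]⟩
  refine exists_ae_eq_apply_of_ae_le_or_ae_lt ?_
  filter_upwards [h, measure_eq_zero_iff_ae_notMem.1 (measure_singleton (0:ℝ))] with l hl hl0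
  rcases lt_or_gt_of_ne (show l ≠ 0 from hl0) with hneg | hpos
  · exact .inr (ae_of_all _ fun s => hneg.trans_le (norm_nonneg _))
  rw [distrib_eq_restrict] at hl
  rcases hl hpos with h0 | hfull
  · exact .inl (measure_eq_zero_iff_ae_notMem.1 h0 |>.mono fun s hs => not_lt.1 hs)
  · refine .inr ((ae_iff_measure_eq (measurableSet_lt measurable_const hu).nullMeasurableSet).2 ?_)
    simp [hfull]

lemma norm_ae_eq_one_of_eLorentzNorm_le_one (ha : 0 < a) (hconc : ConcaveOn ℝ (Icc 0 a) φ)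
    (hm : MonotoneOn φ (Icc 0 a)) (hc : ContinuousOn φ (Icc 0 a)) (hφ0 : φ 0 = 0)
    (hφa : φ a = 1) (hnonlin : ¬ ∀ t ∈ Icc (0:ℝ) a, φ t = t / a) (hu : Measurable (‖u ·‖))
    (h1 : eLorentzNorm φ a u ≤ 1) (h2 : ENNReal.ofReal a ≤ ∫⁻ s in Icc 0 a, ENNReal.ofReal ‖u s‖) :
    ∀ᵐ s ∂volume.restrict (Icc 0 a), ‖u s‖ = 1 := by
  have hle : ENNReal.ofReal a * eLorentzNorm φ a u ≤ ∫⁻ s in Icc 0 a, ENNReal.ofReal ‖u s‖ :=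
    (mul_le_of_le_one_right' h1).trans h2
  obtain ⟨s₀, hs₀⟩ := exists_norm_ae_eq_of_ae_distrib_eq_zero_or_eq ha hu
    (ae_distrib_eq_zero_or_eq_of_mul_eLorentzNorm_le ha hconc hm hc hφ0 hφa hnonlin hu
      (h1.trans_lt ENNReal.one_lt_top).ne hle)
  rw [eLorentzNorm_of_norm_ae_eq ha.le hm hc hφ0 hφa hu hs₀, ENNReal.ofReal_le_one] at h1
  have hint : ∫⁻ s in Icc 0 a, ENNReal.ofReal ‖u s‖ = ENNReal.ofReal a * ENNReal.ofReal ‖u s₀‖ := by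
    rw [lintegral_congr_ae (hs₀.mono fun s hs => by rw [hs]), setLIntegral_const, mul_comm,
      Real.volume_Icc, sub_zero]
  rw [hint, ← ENNReal.ofReal_mul ha.le, ENNReal.ofReal_le_ofReal_iff (by positivity)] at h2
  have : 1 ≤ ‖u s₀‖ := by nlinarith
  exact hs₀.mono fun s hs => hs.trans (le_antisymm h1 this)

lemma norm_ae_eq_one_of_two_le_norm_add_norm (ha : 0 < a) (hconc : ConcaveOn ℝ (Icc 0 a) φ)
    (hm : MonotoneOn φ (Icc 0 a)) (hc : ContinuousOn φ (Icc 0 a)) (hφ0 : φ 0 = 0)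
    (hφa : φ a = 1) (hnonlin : ¬ ∀ t ∈ Icc (0:ℝ) a, φ t = t / a) {v : ℝ → E}
    (hu : Measurable (‖u ·‖)) (hv : Measurable (‖v ·‖)) (hu1 : eLorentzNorm φ a u ≤ 1)
    (hv1 : eLorentzNorm φ a v ≤ 1) (h2 : ∀ᵐ s ∂volume.restrict (Icc 0 a), 2 ≤ ‖u s‖ + ‖v s‖) :
    ∀ᵐ s ∂volume.restrict (Icc 0 a), ‖u s‖ = 1 := by
  refine norm_ae_eq_one_of_eLorentzNorm_le_one ha hconc hm hc hφ0 hφa hnonlin hu hu1 ?_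
  have hv' : ∫⁻ s in Icc 0 a, ENNReal.ofReal ‖v s‖ ≤ ENNReal.ofReal a :=
    (lintegral_norm_le_mul_eLorentzNorm ha hconc hm hc hφ0 hφa hv).trans
      (mul_le_of_le_one_right' hv1)
  refine (ENNReal.add_le_add_iff_right ENNReal.ofReal_ne_top).1
    (le_trans ?_ (add_le_add le_rfl hv'))
  calc ENNReal.ofReal a + ENNReal.ofReal a = ∫⁻ _ in Icc 0 a, ENNReal.ofReal 2 := by
        rw [setLIntegral_const, Real.volume_Icc, sub_zero, ← ENNReal.ofReal_mul zero_le_two,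
          ← ENNReal.ofReal_add ha.le ha.le, two_mul]
  _ ≤ ∫⁻ s in Icc 0 a, (ENNReal.ofReal ‖u s‖ + ENNReal.ofReal ‖v s‖) :=
        lintegral_mono_ae (h2.mono fun s hs => by
          rw [← ENNReal.ofReal_add (norm_nonneg _) (norm_nonneg _)]
          exact ENNReal.ofReal_le_ofReal hs)
  _ = _ := lintegral_add_left hu.ennreal_ofReal _

end Rigidity

/-- If `φ` is a nonlinear, strictly increasing, concave, continuous
function on `[0,a]` with `φ 0 = 0`, `φ a = 1`, then every measurable `f : [0,a] → ℂ`
with `|f| = 1` a.e. is an extreme point of the unit ball of `Λ(φ)[0,a]`. -/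
theorem extreme_of_unimodular (a : ℝ) (ha : 0 < a) (φ : ℝ → ℝ)
    (hconc : ConcaveOn ℝ (Set.Icc 0 a) φ)
    (hcont : ContinuousOn φ (Set.Icc 0 a))
    (hmono : StrictMonoOn φ (Set.Icc 0 a))
    (hφ0 : φ 0 = 0) (hφa : φ a = 1)
    (hnonlin : ¬ ∀ t ∈ Set.Icc (0:ℝ) a, φ t = t / a)
    (f : ℝ → ℂ) (hf : Measurable f)
    (hf1 : ∀ᵐ t ∂(volume.restrict (Set.Icc (0:ℝ) a)), ‖f t‖ = 1) :
    eLorentzNorm φ a f = 1 ∧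
      ∀ g : ℝ → ℂ, Measurable g →
        eLorentzNorm φ a (f + g) ≤ 1 → eLorentzNorm φ a (f - g) ≤ 1 →
        g =ᵐ[volume.restrict (Set.Icc (0:ℝ) a)] 0 := by
  have hm := hmono.monotoneOn
  refine ⟨by simpa using eLorentzNorm_of_norm_ae_eq ha.le hm hcont hφ0 hφa hf.norm hf1,
    fun g hg hfg hfg' => ?_⟩
  have hnorm_add : ∀ᵐ s ∂volume.restrict (Icc 0 a), ‖(f + g) s + (f - g) s‖ = 2 :=
    hf1.mono fun s hs => by
      rw [show (f + g) s + (f - g) s = 2 * f s by simp; ring, norm_mul, hs]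
      norm_num
  have hu1 := norm_ae_eq_one_of_two_le_norm_add_norm ha hconc hm hcont hφ0 hφa hnonlin
    (hf.add hg).norm (hf.sub hg).norm hfg hfg' (hnorm_add.mono fun s hs => hs ▸ norm_add_le _ _)
  have hv1 := norm_ae_eq_one_of_two_le_norm_add_norm ha hconc hm hcont hφ0 hφa hnonlin
    (hf.sub hg).norm (hf.add hg).norm hfg' hfg
    (hnorm_add.mono fun s hs => hs ▸ (norm_add_le _ _).trans_eq (add_comm _ _))
  filter_upwards [hnorm_add, hu1, hv1] with s hs hus hvs
  have huv : (f + g) s = (f - g) s :=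
    eq_of_norm_eq_of_norm_add_eq (hus.trans hvs.symm) (by rw [hs, hus, hvs]; norm_num)
  simp only [Pi.add_apply, Pi.sub_apply] at huv
  exact add_self_eq_zero.1 (by linear_combination huv)

end
end

section
/- Let a > 0 and let h : [0,a] → ℝ be measurable with |h(t)| ≤ 1 for a.e. t ∈ [0,a]. Set E₊ := {t ∈ [0,a] : h(t) > 0} and E₋ := {t ∈ [0,a] : h(t) < 0}. Then for a.e. t ∈ (0, m(E₊)) one has (1 + h)*(t) = 1 + (h·χ_{E₊})*(t); for a.e. t ∈ (m(E₊), a − m(E₋)) one has (1 + h)*(t) = 1; and for a.e. t ∈ (a − m(E₋), a) one has (1 + h)*(t) = 1 − (h·χ_{E₋})*(a − t). -/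
open MeasureTheory Set Filter Topology
open scoped ENNReal NNReal Classical

noncomputable section

/-!
Since `1 + h ≥ 0` a.e., the distribution function of `1 + h` at level `τ` is `m{h > τ - 1}`.
For `τ < 1` the complement `{h ≤ τ - 1}` lies in `E₋`, so this is at least `a - m(E₋)`; hence for
`t < a - m(E₋)` the infimum defining `(1 + h)*(t)` is taken over `τ ≥ 1` only and equals
`1 + (h χ_{E₊})*(t)`, which is `1` once `t ≥ m(E₊)`. For `t > a - m(E₋)` one passes to
complements: `m{h > τ - 1} ≤ t` iff `m{h ≤ τ - 1} ≥ a - t`. The infimum of such `τ` is `1` minus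
the infimum of the `σ` with `m{h < -σ} ≤ a - t` unless `c ↦ m{h < c}` takes the value `a - t` on a
whole interval; every such interval contains a rational `c`, so only countably many `t` are lost.
-/

open scoped Pointwise in
lemma sInf_setOf_sub_one_eq_one_add_sInf {β : Type*} [LE β] {D : ℝ → β} {x : β}
    (hD : ∀ c < 0, ¬ D c ≤ x) (hne : {σ : ℝ | 0 ≤ σ ∧ D σ ≤ x}.Nonempty) :
    sInf {τ : ℝ | 0 ≤ τ ∧ D (τ - 1) ≤ x} = 1 + sInf {σ : ℝ | 0 ≤ σ ∧ D σ ≤ x} := by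
  have hshift :
      {τ : ℝ | 0 ≤ τ ∧ D (τ - 1) ≤ x} = ({1} : Set ℝ) + {σ : ℝ | 0 ≤ σ ∧ D σ ≤ x} := by
    ext τ
    simp only [singleton_add, mem_image, mem_ofPred_eq]
    constructor
    · rintro ⟨-, hτ⟩
      exact ⟨τ - 1, ⟨not_lt.1 fun hneg => hD _ hneg hτ, hτ⟩, by ring⟩
    · rintro ⟨σ, ⟨hσ, hDσ⟩, rfl⟩
      exact ⟨by linarith, by simpa using hDσ⟩
  rw [hshift, csInf_add (singleton_nonempty (1 : ℝ)) bddBelow_singleton hne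
    ⟨0, fun σ hσ => hσ.1⟩, csInf_singleton]

/-- `u c` and `v c` play the roles of `m{h < c}` and `m{h ≤ c}`. -/
lemma sInf_setOf_le_sub_one_eq_one_sub_sInf {β : Type*} [LinearOrder β] {u v : ℝ → β} {x : β}
    (huv : ∀ c, u c ≤ v c) (hvu : ∀ c c', c < c' → v c ≤ u c')
    (hx0 : x ≤ v 0) (hx1 : u (-1) ≤ x) (hx : ∀ q : ℚ, u q ≠ x) :
    sInf {τ : ℝ | 0 ≤ τ ∧ x ≤ v (τ - 1)} = 1 - sInf {σ : ℝ | 0 ≤ σ ∧ u (-σ) ≤ x} := by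
  set S := {τ : ℝ | 0 ≤ τ ∧ x ≤ v (τ - 1)}
  set T := {σ : ℝ | 0 ≤ σ ∧ u (-σ) ≤ x}
  have hS1 : (1 : ℝ) ∈ S := ⟨zero_le_one, by simpa using hx0⟩
  have hT1 : (1 : ℝ) ∈ T := ⟨zero_le_one, hx1⟩
  have hSbdd : BddBelow S := ⟨0, fun τ hτ => hτ.1⟩
  have hTbdd : BddBelow T := ⟨0, fun σ hσ => hσ.1⟩
  apply le_antisymm
  · refine le_of_forall_gt_imp_ge_of_dense fun τ hτ => csInf_le hSbdd ⟨?_, ?_⟩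
    · linarith [csInf_le hTbdd hT1]
    · rcases lt_or_ge 1 τ with h1 | h1
      · exact hx0.trans ((hvu 0 _ (by linarith)).trans (huv _))
      · have hnot : 1 - τ ∉ T := notMem_of_lt_csInf (by linarith) hTbdd
        simp only [T, mem_ofPred_eq, not_and, not_le, neg_sub] at hnot
        exact (hnot (by linarith)).le.trans (huv _)
  · by_contra! hlt
    obtain ⟨q, hSq, hqT⟩ := exists_rat_btwn (show sInf S - 1 < -sInf T by linarith)
    obtain ⟨σ, hσT, hσq⟩ := exists_lt_of_csInf_lt ⟨1, hT1⟩ (show sInf T < -q by linarith)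
    obtain ⟨τ, hτS, hτq⟩ := exists_lt_of_csInf_lt ⟨1, hS1⟩ (show sInf S < q + 1 by linarith)
    refine hx q (le_antisymm ?_ ?_)
    · exact (huv q).trans ((hvu q (-σ) (by linarith)).trans hσT.2)
    · exact hτS.2.trans (hvu _ q (by linarith))

lemma rearr_eq_zero_of_distrib_zero_le {E : Type*} [NormedAddCommGroup E] {a t : ℝ}
    {f : ℝ → E} (h0 : distrib a f 0 ≤ ENNReal.ofReal t) : rearr a f t = 0 :=
  IsLeast.csInf_eq ⟨⟨le_rfl, h0⟩, fun _ hτ => hτ.1⟩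

lemma ae_ne_ofReal_sub {ι : Type*} [Countable ι] (μ : Measure ℝ) [NullSingletonClass μ]
    (Φ : ι → ℝ≥0∞) (a : ℝ) : ∀ᵐ t ∂μ, t ≤ a → ∀ i, Φ i ≠ ENNReal.ofReal (a - t) := by
  filter_upwards [(countable_range fun i => a - (Φ i).toReal).ae_notMem μ] with t ht hta i hi
  refine ht ⟨i, show a - (Φ i).toReal = t from ?_⟩
  rw [hi, ENNReal.toReal_ofReal (sub_nonneg.2 hta), sub_sub_cancel]

section LevelSets

variable {a : ℝ} {h : ℝ → ℝ}

lemma volume_sep_Icc_ne_top (p : ℝ → Prop) : volume {s ∈ Icc (0 : ℝ) a | p s} ≠ ∞ :=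
  measure_ne_top_of_subset (sep_subset _ _) measure_Icc_lt_top.ne

lemma volume_sep_lt_le_ofReal_iff (hm : Measurable h) {t : ℝ} (ht0 : 0 ≤ t) (hta : t ≤ a)
    (c : ℝ) : volume {s ∈ Icc (0 : ℝ) a | c < h s} ≤ ENNReal.ofReal t ↔
      ENNReal.ofReal (a - t) ≤ volume {s ∈ Icc (0 : ℝ) a | h s ≤ c} := by
  have hsum : volume {s ∈ Icc (0 : ℝ) a | c < h s} + volume {s ∈ Icc (0 : ℝ) a | h s ≤ c} =
      ENNReal.ofReal t + ENNReal.ofReal (a - t) := by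
    rw [← ENNReal.ofReal_add ht0 (sub_nonneg.2 hta), add_sub_cancel, ← sub_zero a,
      ← Real.volume_Icc, sub_zero]
    convert measure_inter_add_sdiff (μ := volume) (Icc (0 : ℝ) a)
      (measurableSet_lt measurable_const hm : MeasurableSet {s | c < h s}) using 3
    all_goals ext s; simp
  rw [← ENNReal.add_le_add_iff_right (volume_sep_Icc_ne_top _), hsum,
    ENNReal.add_le_add_iff_left ENNReal.ofReal_ne_top]

lemma toReal_volume_posSet_add_toReal_volume_negSet_le (ha : 0 ≤ a) (hm : Measurable h) :
    (volume (posSet a h)).toReal + (volume (negSet a h)).toReal ≤ a := by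
  have hdisj : Disjoint (posSet a h) (negSet a h) :=
    disjoint_left.2 fun _ hp hn => lt_asymm hp.2 hn.2
  calc (volume (posSet a h)).toReal + (volume (negSet a h)).toReal
      = volume.real (posSet a h ∪ negSet a h) :=
        (measureReal_union hdisj (measurableSet_Icc.inter (measurableSet_lt hm measurable_const))
          (volume_sep_Icc_ne_top _) (volume_sep_Icc_ne_top _)).symm
    _ ≤ volume.real (Icc (0 : ℝ) a) :=
        measureReal_mono (union_subset (sep_subset _ _) (sep_subset _ _)) measure_Icc_lt_top.ne
    _ = a := by rw [Real.volume_real_Icc_of_le ha, sub_zero]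

lemma distrib_indicator_posSet {σ : ℝ} (hσ : 0 ≤ σ) :
    distrib a ((posSet a h).indicator h) σ = volume {s ∈ Icc (0 : ℝ) a | σ < h s} := by
  refine congrArg volume (sep_ext_iff.2 fun s hs => ?_)
  by_cases hpos : 0 < h s
  · rw [indicator_of_mem (show s ∈ posSet a h from ⟨hs, hpos⟩), Real.norm_eq_abs,
      abs_of_pos hpos]
  · rw [indicator_of_notMem fun hs' => hpos hs'.2, norm_zero]
    constructor <;> intro <;> linarith

lemma distrib_indicator_negSet {σ : ℝ} (hσ : 0 ≤ σ) :
    distrib a ((negSet a h).indicator h) σ = volume {s ∈ Icc (0 : ℝ) a | h s < -σ} := by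
  refine congrArg volume (sep_ext_iff.2 fun s hs => ?_)
  by_cases hneg : h s < 0
  · rw [indicator_of_mem (show s ∈ negSet a h from ⟨hs, hneg⟩), Real.norm_eq_abs,
      abs_of_neg hneg, lt_neg]
  · rw [indicator_of_notMem fun hs' => hneg hs'.2, norm_zero]
    constructor <;> intro <;> linarith

variable (hb : ∀ᵐ t ∂(volume.restrict (Icc (0 : ℝ) a)), |h t| ≤ 1)
include hb

lemma volume_sep_one_lt_abs_eq_zero : volume {s ∈ Icc (0 : ℝ) a | 1 < |h s|} = 0 :=
  measure_mono_null (fun _ hs => show ¬_ from fun hle => (hle hs.1).not_gt hs.2)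
    (ae_iff.1 ((ae_restrict_iff' measurableSet_Icc).1 hb))

lemma distrib_one_add (τ : ℝ) :
    distrib a (fun s => 1 + h s) τ = volume {s ∈ Icc (0 : ℝ) a | τ - 1 < h s} := by
  refine measure_congr (eventuallyEq_set.2 ?_)
  filter_upwards [(ae_restrict_iff' measurableSet_Icc).1 hb] with s hs
  simp only [Real.norm_eq_abs]
  refine and_congr_right fun hsI => ?_
  rw [abs_of_nonneg (by linarith [neg_abs_le (h s), hs hsI]), sub_lt_iff_lt_add']

lemma rearr_one_add_eq_one_add_rearr_posSet (hm : Measurable h) {t : ℝ} (ht0 : 0 ≤ t)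
    (ht : t < a - (volume (negSet a h)).toReal) :
    rearr a (fun s => 1 + h s) t = 1 + rearr a ((posSet a h).indicator h) t := by
  have hneg : volume (negSet a h) ≠ ∞ := volume_sep_Icc_ne_top _
  have hta : t ≤ a := by linarith [ENNReal.toReal_nonneg (a := volume (negSet a h))]
  have hbelow : ∀ c < 0, ¬ volume {s ∈ Icc (0 : ℝ) a | c < h s} ≤ ENNReal.ofReal t := by
    intro c hc
    rw [volume_sep_lt_le_ofReal_iff hm ht0 hta, not_le]
    calc volume {s ∈ Icc (0 : ℝ) a | h s ≤ c} ≤ volume (negSet a h) :=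
          measure_mono fun _ hs => ⟨hs.1, hs.2.trans_lt hc⟩
      _ < ENNReal.ofReal (a - t) :=
          (ENNReal.lt_ofReal_iff_toReal_lt hneg).2 (by linarith)
  have hone : volume {s ∈ Icc (0 : ℝ) a | 1 < h s} ≤ ENNReal.ofReal t := by
    refine (measure_mono_null ?_ (volume_sep_one_lt_abs_eq_zero hb)).trans_le zero_le
    exact fun s hs => ⟨hs.1, hs.2.trans_le (le_abs_self _)⟩
  simp only [rearr, distrib_one_add hb]
  rw [sInf_setOf_sub_one_eq_one_add_sInf hbelow ⟨1, zero_le_one, hone⟩]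
  congr 2
  ext σ
  exact and_congr_right fun hσ => by rw [distrib_indicator_posSet hσ]

lemma rearr_one_add_eq_one_sub_rearr_negSet (hm : Measurable h) {t : ℝ} (ht0 : 0 ≤ t)
    (hta : t ≤ a) (ht : a - (volume (negSet a h)).toReal < t)
    (hq : ∀ q : ℚ, volume {s ∈ Icc (0 : ℝ) a | h s < q} ≠ ENNReal.ofReal (a - t)) :
    rearr a (fun s => 1 + h s) t = 1 - rearr a ((negSet a h).indicator h) (a - t) := by
  have hneg : volume (negSet a h) ≠ ∞ := volume_sep_Icc_ne_top _
  have hzero : ENNReal.ofReal (a - t) ≤ volume {s ∈ Icc (0 : ℝ) a | h s ≤ 0} :=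
    ((ENNReal.ofReal_lt_iff_lt_toReal (by linarith) hneg).2
      (by linarith)).le.trans (measure_mono fun s (hs : s ∈ negSet a h) => ⟨hs.1, hs.2.le⟩)
  have hone : volume {s ∈ Icc (0 : ℝ) a | h s < -1} ≤ ENNReal.ofReal (a - t) := by
    refine (measure_mono_null ?_ (volume_sep_one_lt_abs_eq_zero hb)).trans_le zero_le
    exact fun s hs => ⟨hs.1, lt_abs.2 (Or.inr (by linarith [hs.2]))⟩
  simp only [rearr, distrib_one_add hb, volume_sep_lt_le_ofReal_iff hm ht0 hta]
  have hlt_le (c : ℝ) :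
      volume {s ∈ Icc (0 : ℝ) a | h s < c} ≤ volume {s ∈ Icc (0 : ℝ) a | h s ≤ c} :=
    measure_mono fun _ hs => ⟨hs.1, hs.2.le⟩
  have hle_lt {c c' : ℝ} (hc : c < c') :
      volume {s ∈ Icc (0 : ℝ) a | h s ≤ c} ≤ volume {s ∈ Icc (0 : ℝ) a | h s < c'} :=
    measure_mono fun _ hs => ⟨hs.1, hs.2.trans_lt hc⟩
  rw [sInf_setOf_le_sub_one_eq_one_sub_sInf hlt_le (fun _ _ => hle_lt) hzero hone hq]
  congr 2
  ext σ
  exact and_congr_right fun hσ => by rw [distrib_indicator_negSet hσ]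

end LevelSets

/-- For measurable `h : [0,a] → ℝ` with `|h| ≤ 1` a.e., the decreasing
rearrangement of `1 + h` satisfies: `(1+h)* = 1 + (h χ_{E₊})*` on `(0, m E₊)`,
`(1+h)* = 1` on `(m E₊, a − m E₋)`, and `(1+h)*(t) = 1 − (h χ_{E₋})*(a − t)` on
`(a − m E₋, a)`, where `E₊ = {h > 0}` and `E₋ = {h < 0}` in `[0,a]`. -/
theorem rearr_one_add_h (a : ℝ) (ha : 0 < a)
    (h : ℝ → ℝ) (hm : Measurable h)
    (hb : ∀ᵐ t ∂(volume.restrict (Set.Icc (0:ℝ) a)), |h t| ≤ 1) :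
    (∀ᵐ t ∂(volume.restrict (Set.Ioo (0:ℝ) ((volume (posSet a h)).toReal))),
        rearr a (fun s => 1 + h s) t = 1 + rearr a ((posSet a h).indicator h) t) ∧
    (∀ᵐ t ∂(volume.restrict
        (Set.Ioo ((volume (posSet a h)).toReal) (a - (volume (negSet a h)).toReal))),
        rearr a (fun s => 1 + h s) t = 1) ∧
    (∀ᵐ t ∂(volume.restrict (Set.Ioo (a - (volume (negSet a h)).toReal) a)),
        rearr a (fun s => 1 + h s) t = 1 - rearr a ((negSet a h).indicator h) (a - t)) := by
  have hsum := toReal_volume_posSet_add_toReal_volume_negSet_le ha.le hm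
  have hpos : 0 ≤ (volume (posSet a h)).toReal := ENNReal.toReal_nonneg
  refine ⟨ae_restrict_of_forall_mem measurableSet_Ioo fun t ht => ?_,
    ae_restrict_of_forall_mem measurableSet_Ioo fun t ht => ?_, ?_⟩
  · exact rearr_one_add_eq_one_add_rearr_posSet hb hm ht.1.le (by linarith [ht.2])
  · have hvanish : rearr a ((posSet a h).indicator h) t = 0 := by
      refine rearr_eq_zero_of_distrib_zero_le ?_
      rw [distrib_indicator_posSet le_rfl, ENNReal.le_ofReal_iff_toReal_le
        (volume_sep_Icc_ne_top _) (by linarith [ht.1])]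
      exact ht.1.le
    rw [rearr_one_add_eq_one_add_rearr_posSet hb hm (by linarith [ht.1]) ht.2, hvanish, add_zero]
  · filter_upwards [ae_restrict_mem measurableSet_Ioo,
      ae_restrict_of_ae (ae_ne_ofReal_sub volume
        (fun q : ℚ => volume {s ∈ Icc (0 : ℝ) a | h s < q}) a)] with t ht hq
    exact rearr_one_add_eq_one_sub_rearr_negSet hb hm (by linarith [ht.1]) ht.2.le ht.1
      (hq ht.2.le)

end
end
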